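/- arXiv:2210.16712 — 2 statements merged into one kernel-verified Lean document; each statement's English description precedes it below -/
import Mathlib

section
/- Let H : ℝ^S → ℂ^{M×K} be continuously differentiable and define the value function v(θ) = max_{W : ‖W‖_F^2 ≤ P} F(W, H(θ)) (the maximum is attained since F(·, H(θ)) is continuous on the compact feasible ball). If v is differentiable at a point θ_0 ∈ ℝ^S, then for every maximizer W* ∈ argmax_{‖W‖_F^2 ≤ P} F(W, H(θ_0)) one has ∇v(θ_0) = ∇_θ [ F(W*, H(θ)) ] |_{θ = θ_0}; that is, the gradient of the value function equals the partial gradient of the objective with the maximizing precoder held fixed. -/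
open scoped BigOperators ComplexConjugate
open Finset MeasureTheory

noncomputable section

/-- `SINR_k(W, h)` for user `k`. -/
def SINR {M K : ℕ} (σ2k : ℝ) (W : Fin K → EuclideanSpace ℂ (Fin M))
    (h : EuclideanSpace ℂ (Fin M)) (k : Fin K) : ℝ :=
  ‖(inner ℂ h (W k) : ℂ)‖ ^ 2 /
    ((∑ j ∈ Finset.univ.erase k, ‖(inner ℂ h (W j) : ℂ)‖ ^ 2) + σ2k)

/-- Weighted sumrate `F(W, H)`. -/
def sumrateF {M K : ℕ} (α σ2 : Fin K → ℝ)
    (W H : Fin K → EuclideanSpace ℂ (Fin M)) : ℝ :=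
  ∑ k, α k * Real.logb 2 (1 + SINR (σ2 k) W (H k) k)

/-- `(m)`-th entry of the Wirtinger derivative row vector `d_k(W, H)`. -/
def Dmat {M K : ℕ} (α σ2 : Fin K → ℝ)
    (W H : Fin K → EuclideanSpace ℂ (Fin M)) (k : Fin K) (m : Fin M) : ℂ :=
  let c : ℂ := (inner ℂ (H k) (W k) : ℂ)
  let I : ℝ := ∑ j ∈ Finset.univ.erase k, ‖(inner ℂ (H k) (W j) : ℂ)‖ ^ 2
  ((α k : ℂ) * (((I + σ2 k : ℝ) : ℂ) * c * (starRingEnd ℂ) (W k m)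
      - ((‖c‖ ^ 2 : ℝ) : ℂ) *
        ∑ j ∈ Finset.univ.erase k, (inner ℂ (H k) (W j) : ℂ) * (starRingEnd ℂ) (W j m)))
    / ((Real.log 2 * ((I + σ2 k) ^ 2 + ‖c‖ ^ 2 * (I + σ2 k)) : ℝ) : ℂ)

/-- Frobenius norm of `D(W,H)`. -/
def normD {M K : ℕ} (α σ2 : Fin K → ℝ)
    (W H : Fin K → EuclideanSpace ℂ (Fin M)) : ℝ :=
  Real.sqrt (∑ k, ∑ m, ‖Dmat α σ2 W H k m‖ ^ 2)

/-- Frobenius norm of a channel matrix given by its columns. -/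
def frobNorm {M K : ℕ} (H : Fin K → EuclideanSpace ℂ (Fin M)) : ℝ :=
  Real.sqrt (∑ k, ‖H k‖ ^ 2)

/-! For every `θ` the frozen objective `θ ↦ F(W*, H θ)` is a competitor in the supremum
defining `v θ`, so it lies below `v`, and it touches `v` at `θ₀` because `W*` is a maximizer
there. The difference `v - F(W*, H ·)` therefore has a minimum at `θ₀`, where its derivative
vanishes. Since `sSup` of an unbounded set of reals is junk, the feasible values are bounded
above through `SINR_k ≤ ‖h_k‖² ‖w_k‖² / σ_k²`. -/

theorem fderiv_eq_of_eventuallyLE_of_eq {E : Type*} [NormedAddCommGroup E] [NormedSpace ℝ E]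
    {f g : E → ℝ} {x : E} (hf : DifferentiableAt ℝ f x) (hg : DifferentiableAt ℝ g x)
    (hle : f ≤ᶠ[nhds x] g) (heq : f x = g x) : fderiv ℝ f x = fderiv ℝ g x := by
  have hmin : IsLocalMin (fun y => g y - f y) x := by
    filter_upwards [hle] with y hy
    simpa only [heq, sub_self, sub_nonneg] using hy
  have := hmin.fderiv_eq_zero
  rwa [fderiv_fun_sub hg hf, sub_eq_zero, eq_comm] at this

section SINR

variable {M K : ℕ}

lemma interference_add_noise_pos {σ2k : ℝ} (hσ : 0 < σ2k)
    (W : Fin K → EuclideanSpace ℂ (Fin M)) (h : EuclideanSpace ℂ (Fin M)) (k : Fin K) :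
    0 < (∑ j ∈ univ.erase k, ‖(inner ℂ h (W j) : ℂ)‖ ^ 2) + σ2k :=
  add_pos_of_nonneg_of_pos (sum_nonneg fun _ _ => by positivity) hσ

lemma SINR_nonneg {σ2k : ℝ} (hσ : 0 < σ2k)
    (W : Fin K → EuclideanSpace ℂ (Fin M)) (h : EuclideanSpace ℂ (Fin M)) (k : Fin K) :
    0 ≤ SINR σ2k W h k :=
  div_nonneg (by positivity) (interference_add_noise_pos hσ W h k).le

lemma SINR_le {σ2k : ℝ} (hσ : 0 < σ2k)
    (W : Fin K → EuclideanSpace ℂ (Fin M)) (h : EuclideanSpace ℂ (Fin M)) (k : Fin K) :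
    SINR σ2k W h k ≤ ‖h‖ ^ 2 * ‖W k‖ ^ 2 / σ2k := by
  have hI : σ2k ≤ (∑ j ∈ univ.erase k, ‖(inner ℂ h (W j) : ℂ)‖ ^ 2) + σ2k :=
    le_add_of_nonneg_left (sum_nonneg fun _ _ => by positivity)
  have hCS : ‖(inner ℂ h (W k) : ℂ)‖ ^ 2 ≤ ‖h‖ ^ 2 * ‖W k‖ ^ 2 := by
    rw [← mul_pow]
    exact pow_le_pow_left₀ (norm_nonneg _) (norm_inner_le_norm h (W k)) 2
  calc SINR σ2k W h k ≤ ‖(inner ℂ h (W k) : ℂ)‖ ^ 2 / σ2k :=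
        div_le_div_of_nonneg_left (by positivity) hσ hI
    _ ≤ ‖h‖ ^ 2 * ‖W k‖ ^ 2 / σ2k := div_le_div_of_nonneg_right hCS hσ.le

lemma sumrateF_le {α σ2 : Fin K → ℝ} (hα : ∀ k, 0 ≤ α k) (hσ : ∀ k, 0 < σ2 k) {P : ℝ}
    (W H : Fin K → EuclideanSpace ℂ (Fin M)) (hW : ∑ k, ‖W k‖ ^ 2 ≤ P) :
    sumrateF α σ2 W H ≤ ∑ k, α k * Real.logb 2 (1 + ‖H k‖ ^ 2 * P / σ2 k) := by
  refine sum_le_sum fun k _ => mul_le_mul_of_nonneg_left ?_ (hα k)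
  have hWk : ‖W k‖ ^ 2 ≤ P :=
    (single_le_sum (f := fun j => ‖W j‖ ^ 2) (fun _ _ => by positivity) (mem_univ k)).trans hW
  have hSINR : SINR (σ2 k) W (H k) k ≤ ‖H k‖ ^ 2 * P / σ2 k :=
    (SINR_le (hσ k) W (H k) k).trans <|
      div_le_div_of_nonneg_right (mul_le_mul_of_nonneg_left hWk (by positivity)) (hσ k).le
  exact Real.logb_le_logb_of_le one_lt_two (by linarith [SINR_nonneg (hσ k) W (H k) k])
    (by linarith)

variable {E : Type*} [NormedAddCommGroup E] [NormedSpace ℝ E]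

lemma differentiableAt_norm_inner_sq_comp {F : Type*} [NormedAddCommGroup F]
    [InnerProductSpace ℂ F] [NormedSpace ℝ F] [IsScalarTower ℝ ℂ F]
    {h : E → F} {x : E} (hh : DifferentiableAt ℝ h x) (w : F) :
    DifferentiableAt ℝ (fun y => ‖(inner ℂ (h y) w : ℂ)‖ ^ 2) x := by
  have hinner : DifferentiableAt ℝ (fun y => (inner ℂ w (h y) : ℂ)) x :=
    ((innerSL ℂ w).restrictScalars ℝ).differentiableAt.comp x hh
  simpa only [norm_inner_symm] using hinner.norm_sq ℝ

lemma differentiableAt_SINR_comp {σ2k : ℝ} (hσ : 0 < σ2k)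
    (W : Fin K → EuclideanSpace ℂ (Fin M)) {h : E → EuclideanSpace ℂ (Fin M)} {x : E}
    (hh : DifferentiableAt ℝ h x) (k : Fin K) :
    DifferentiableAt ℝ (fun y => SINR σ2k W (h y) k) x := by
  simp only [SINR, div_eq_mul_inv]
  exact (differentiableAt_norm_inner_sq_comp hh (W k)).mul
    (((DifferentiableAt.fun_sum fun j _ => differentiableAt_norm_inner_sq_comp hh (W j)).add_const
      σ2k).inv (interference_add_noise_pos hσ W (h x) k).ne')

lemma differentiableAt_sumrateF_comp (α : Fin K → ℝ) {σ2 : Fin K → ℝ} (hσ : ∀ k, 0 < σ2 k)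
    (W : Fin K → EuclideanSpace ℂ (Fin M)) {H : E → Fin K → EuclideanSpace ℂ (Fin M)} {x : E}
    (hH : DifferentiableAt ℝ H x) :
    DifferentiableAt ℝ (fun y => sumrateF α σ2 W (H y)) x := by
  refine DifferentiableAt.fun_sum fun k _ => DifferentiableAt.const_mul ?_ (α k)
  have hHk : DifferentiableAt ℝ (fun y => H y k) x := differentiableAt_pi.1 hH k
  have hlog := ((differentiableAt_SINR_comp (hσ k) W hHk k).const_add 1).log
    (by linarith [SINR_nonneg (hσ k) W (H x k) k])
  simpa only [Real.logb, div_eq_mul_inv] using hlog.mul_const (Real.log 2)⁻¹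

end SINR

theorem fderiv_value_function_eq_fderiv_frozen_precoder_general
    {M K S : ℕ}
    (α σ2 : Fin K → ℝ) (hα : ∀ k, 0 ≤ α k) (hσ : ∀ k, 0 < σ2 k)
    (P : ℝ)
    (Hfun : EuclideanSpace ℝ (Fin S) → Fin K → EuclideanSpace ℂ (Fin M))
    (hHfun : ContDiff ℝ 1 Hfun)
    (θ0 : EuclideanSpace ℝ (Fin S))
    (hvdiff : DifferentiableAt ℝ
      (fun θ => sSup ((fun W => sumrateF α σ2 W (Hfun θ)) ''
        {W : Fin K → EuclideanSpace ℂ (Fin M) | ∑ k, ‖W k‖ ^ 2 ≤ P})) θ0)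
    (Wstar : Fin K → EuclideanSpace ℂ (Fin M))
    (hfeas : ∑ k, ‖Wstar k‖ ^ 2 ≤ P)
    (hmax : ∀ W : Fin K → EuclideanSpace ℂ (Fin M), (∑ k, ‖W k‖ ^ 2 ≤ P) →
      sumrateF α σ2 W (Hfun θ0) ≤ sumrateF α σ2 Wstar (Hfun θ0)) :
    fderiv ℝ
        (fun θ => sSup ((fun W => sumrateF α σ2 W (Hfun θ)) ''
          {W : Fin K → EuclideanSpace ℂ (Fin M) | ∑ k, ‖W k‖ ^ 2 ≤ P})) θ0
      = fderiv ℝ (fun θ => sumrateF α σ2 Wstar (Hfun θ)) θ0 := by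
  set values := fun θ => (fun W => sumrateF α σ2 W (Hfun θ)) ''
    {W : Fin K → EuclideanSpace ℂ (Fin M) | ∑ k, ‖W k‖ ^ 2 ≤ P}
  have hmem : ∀ θ, sumrateF α σ2 Wstar (Hfun θ) ∈ values θ := fun θ => ⟨Wstar, hfeas, rfl⟩
  have hbdd : ∀ θ, BddAbove (values θ) := by
    intro θ
    refine ⟨∑ k, α k * Real.logb 2 (1 + ‖Hfun θ k‖ ^ 2 * P / σ2 k), ?_⟩
    rintro _ ⟨W, hW, rfl⟩
    exact sumrateF_le hα hσ W (Hfun θ) hW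
  have htouch : sSup (values θ0) = sumrateF α σ2 Wstar (Hfun θ0) :=
    le_antisymm (csSup_le ⟨_, hmem θ0⟩ fun _ ⟨W, hW, hWv⟩ => hWv ▸ hmax W hW)
      (le_csSup (hbdd θ0) (hmem θ0))
  exact (fderiv_eq_of_eventuallyLE_of_eq
    (differentiableAt_sumrateF_comp α hσ Wstar (hHfun.differentiable one_ne_zero θ0)) hvdiff
    (Filter.Eventually.of_forall fun θ => le_csSup (hbdd θ) (hmem θ)) htouch.symm).symm

/-- Danskin-type result — if the value function of the inner (precoding)
problem is differentiable, its gradient equals the partial gradient of the objective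
with any maximizing precoder held fixed. -/
theorem fderiv_value_function_eq_fderiv_frozen_precoder
    {M K S : ℕ} (hM : 1 ≤ M) (hK : 1 ≤ K) (hS : 1 ≤ S)
    (α σ2 : Fin K → ℝ) (hα : ∀ k, 0 ≤ α k) (hσ : ∀ k, 0 < σ2 k)
    (P : ℝ) (hP : 0 < P)
    (Hfun : EuclideanSpace ℝ (Fin S) → Fin K → EuclideanSpace ℂ (Fin M))
    (hHfun : ContDiff ℝ 1 Hfun)
    (θ0 : EuclideanSpace ℝ (Fin S))
    (hvdiff : DifferentiableAt ℝ
      (fun θ => sSup ((fun W => sumrateF α σ2 W (Hfun θ)) ''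
        {W : Fin K → EuclideanSpace ℂ (Fin M) | ∑ k, ‖W k‖ ^ 2 ≤ P})) θ0)
    (Wstar : Fin K → EuclideanSpace ℂ (Fin M))
    (hfeas : ∑ k, ‖Wstar k‖ ^ 2 ≤ P)
    (hmax : ∀ W : Fin K → EuclideanSpace ℂ (Fin M), (∑ k, ‖W k‖ ^ 2 ≤ P) →
      sumrateF α σ2 W (Hfun θ0) ≤ sumrateF α σ2 Wstar (Hfun θ0)) :
    fderiv ℝ
        (fun θ => sSup ((fun W => sumrateF α σ2 W (Hfun θ)) ''
          {W : Fin K → EuclideanSpace ℂ (Fin M) | ∑ k, ‖W k‖ ^ 2 ≤ P})) θ0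
      = fderiv ℝ (fun θ => sumrateF α σ2 Wstar (Hfun θ)) θ0 :=
  fderiv_value_function_eq_fderiv_frozen_precoder_general α σ2 hα hσ P Hfun hHfun θ0 hvdiff Wstar
    hfeas hmax
end
end

section
/- Let h : ℝ^S → ℝ be differentiable with L_1-Lipschitz gradient, let μ > 0, and let u ∼ N(0, I_S). Then for every θ ∈ ℝ^S, ‖ E[ ∇h(θ + μu) ] − ∇h(θ) ‖_2 ≤ μ L_1 √S. -/
/-!
Since `∇h` is `L₁`-Lipschitz, `‖∇h(θ + μu) − ∇h(θ)‖ ≤ μ L₁ ‖u‖` pointwise, so the bias is at most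
`μ L₁ E‖u‖`. The hypothesis on `γ` says that `γ` is the standard Gaussian measure, for which
`E‖u‖ ≤ √(E‖u‖²) = √S` by Jensen's inequality.
-/

open MeasureTheory ProbabilityTheory

noncomputable section

lemma integral_le_sqrt_integral_sq {Ω : Type*} [MeasurableSpace Ω] {P : Measure Ω}
    [IsProbabilityMeasure P] {f : Ω → ℝ} (hf : MemLp f 2 P) :
    ∫ ω, f ω ∂P ≤ √(∫ ω, f ω ^ 2 ∂P) := by
  have hsq : (∫ ω, f ω ∂P) ^ 2 ≤ ∫ ω, f ω ^ 2 ∂P := by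
    have := variance_nonneg f P
    rw [variance_eq_sub hf] at this
    simpa using this
  exact (le_abs_self _).trans (Real.abs_le_sqrt hsq)

lemma integral_sq_gaussianReal (m : ℝ) (v : NNReal) :
    ∫ x, x ^ 2 ∂gaussianReal m v = m ^ 2 + v := by
  have h := variance_eq_sub (memLp_id_gaussianReal (μ := m) (v := v) 2)
  rw [variance_id_gaussianReal] at h
  simp only [id, Pi.pow_apply, integral_id_gaussianReal] at h
  linarith

section stdGaussian

variable {E : Type*} [NormedAddCommGroup E] [InnerProductSpace ℝ E] [FiniteDimensional ℝ E]
  [MeasurableSpace E] [BorelSpace E]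

lemma integral_norm_sq_stdGaussian :
    ∫ x, ‖x‖ ^ 2 ∂stdGaussian E = Module.finrank ℝ E := by
  have hsq : Integrable (fun t : ℝ => t ^ 2) (gaussianReal 0 1) :=
    (memLp_id_gaussianReal 2).integrable_sq
  have hnorm (x : Fin (Module.finrank ℝ E) → ℝ) :
      ‖∑ i, x i • stdOrthonormalBasis ℝ E i‖ ^ 2 = ∑ i, x i ^ 2 := by
    rw [(stdOrthonormalBasis ℝ E).sum_repr_symm (WithLp.toLp 2 x), LinearIsometryEquiv.norm_map,
      EuclideanSpace.norm_sq_eq]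
    simp
  rw [stdGaussian, integral_map (Measurable.aemeasurable (by fun_prop)) (by fun_prop)]
  simp_rw [hnorm]
  rw [integral_finsetSum _ fun i _ =>
    integrable_comp_eval (i := i) (μ := fun _ => gaussianReal 0 1) hsq]
  simp [integral_comp_eval (μ := fun _ => gaussianReal 0 1) hsq.aestronglyMeasurable,
    integral_sq_gaussianReal]

lemma integral_norm_stdGaussian_le :
    ∫ x, ‖x‖ ∂stdGaussian E ≤ √(Module.finrank ℝ E) := by
  rw [← integral_norm_sq_stdGaussian]
  exact integral_le_sqrt_integral_sq IsGaussian.memLp_two_id.norm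

end stdGaussian

lemma eq_stdGaussian_of_map_equiv {ι : Type*} [Fintype ι] {γ : Measure (EuclideanSpace ℝ ι)}
    (hγ : γ.map (EuclideanSpace.equiv ι ℝ) = Measure.pi fun _ : ι => gaussianReal 0 1) :
    γ = stdGaussian (EuclideanSpace ℝ ι) := by
  rw [← map_pi_eq_stdGaussian, ← hγ, Measure.map_map (by fun_prop) (by fun_prop)]
  exact Measure.map_id.symm

lemma norm_integral_comp_add_smul_sub_le {E F : Type*} [NormedAddCommGroup E] [NormedSpace ℝ E]
    [MeasurableSpace E] [OpensMeasurableSpace E] [NormedAddCommGroup F] [NormedSpace ℝ F]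
    [CompleteSpace F] [SecondCountableTopologyEither E F] {γ : Measure E} [IsProbabilityMeasure γ]
    (hγ : Integrable (‖·‖) γ) {f : E → F} {K : NNReal} (hf : LipschitzWith K f) (θ : E) (μ : ℝ) :
    ‖∫ u, f (θ + μ • u) ∂γ - f θ‖ ≤ |μ| * K * ∫ u, ‖u‖ ∂γ := by
  have hbound (u : E) : ‖f (θ + μ • u) - f θ‖ ≤ |μ| * K * ‖u‖ :=
    calc ‖f (θ + μ • u) - f θ‖ ≤ K * ‖θ + μ • u - θ‖ := hf.norm_sub_le _ _
      _ = |μ| * K * ‖u‖ := by rw [add_sub_cancel_left, norm_smul, Real.norm_eq_abs]; ring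
  have hint : Integrable (fun u => f (θ + μ • u) - f θ) γ :=
    (hγ.const_mul _).mono'
      ((hf.continuous.comp (by fun_prop)).sub continuous_const).aestronglyMeasurable
      (.of_forall hbound)
  have hg : Integrable (fun u => f (θ + μ • u)) γ :=
    (hint.add (integrable_const (f θ))).congr (.of_forall fun u => sub_add_cancel _ _)
  calc ‖∫ u, f (θ + μ • u) ∂γ - f θ‖ = ‖∫ u, (f (θ + μ • u) - f θ) ∂γ‖ := by
        simp [integral_sub hg (integrable_const _)]
    _ ≤ ∫ u, |μ| * K * ‖u‖ ∂γ := norm_integral_le_of_norm_le (hγ.const_mul _) (.of_forall hbound)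
    _ = |μ| * K * ∫ u, ‖u‖ ∂γ := integral_const_mul _ _

theorem gaussian_smoothing_gradient_bias_general
    {S : ℕ}
    (γ : Measure (EuclideanSpace ℝ (Fin S)))
    (hγ : Measure.map (⇑(EuclideanSpace.equiv (Fin S) ℝ)) γ
      = Measure.pi fun _ : Fin S => gaussianReal 0 1)
    (h : EuclideanSpace ℝ (Fin S) → ℝ)
    (L1 : ℝ) (hL1 : 0 ≤ L1)
    (hLipGrad : ∀ x y : EuclideanSpace ℝ (Fin S),
      ‖gradient h x - gradient h y‖ ≤ L1 * ‖x - y‖)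
    (μ : ℝ) (hμ : 0 < μ) (θ : EuclideanSpace ℝ (Fin S)) :
    ‖(∫ u, gradient h (θ + μ • u) ∂γ) - gradient h θ‖ ≤ μ * L1 * Real.sqrt S := by
  obtain rfl := eq_stdGaussian_of_map_equiv hγ
  have hgrad : LipschitzWith L1.toNNReal (gradient h) := .of_dist_le_mul fun x y => by
    simpa [dist_eq_norm, Real.coe_toNNReal _ hL1] using hLipGrad x y
  have hmoment := integral_norm_stdGaussian_le (E := EuclideanSpace ℝ (Fin S))
  rw [finrank_euclideanSpace_fin] at hmoment
  calc ‖(∫ u, gradient h (θ + μ • u) ∂stdGaussian _) - gradient h θ‖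
      ≤ |μ| * L1.toNNReal * ∫ u, ‖u‖ ∂stdGaussian (EuclideanSpace ℝ (Fin S)) :=
        norm_integral_comp_add_smul_sub_le IsGaussian.integrable_id.norm hgrad θ μ
    _ ≤ μ * L1 * Real.sqrt S := by
        rw [abs_of_pos hμ, Real.coe_toNNReal _ hL1]
        gcongr

/-- Gaussian smoothing bias bound,
`‖E[∇h(θ + μu)] − ∇h(θ)‖ ≤ μ L₁ √S`. -/
theorem gaussian_smoothing_gradient_bias
    {S : ℕ} (hS : 1 ≤ S)
    (γ : Measure (EuclideanSpace ℝ (Fin S)))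
    (hγ : Measure.map (⇑(EuclideanSpace.equiv (Fin S) ℝ)) γ
      = Measure.pi fun _ : Fin S => gaussianReal 0 1)
    (h : EuclideanSpace ℝ (Fin S) → ℝ)
    (hdiff : Differentiable ℝ h)
    (L1 : ℝ) (hL1 : 0 ≤ L1)
    (hLipGrad : ∀ x y : EuclideanSpace ℝ (Fin S),
      ‖gradient h x - gradient h y‖ ≤ L1 * ‖x - y‖)
    (μ : ℝ) (hμ : 0 < μ) (θ : EuclideanSpace ℝ (Fin S)) :
    ‖(∫ u, gradient h (θ + μ • u) ∂γ) - gradient h θ‖ ≤ μ * L1 * Real.sqrt S :=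
  gaussian_smoothing_gradient_bias_general γ hγ h L1 hL1 hLipGrad μ hμ θ
end
end
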